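/- A case base CB (reason model) is consistent if and only if there exists a total classifier f : 2^Atm₀ → {0,1,?} satisfying two-way monotonicity such that f(X ∪ (s ∩ Atm₀^(x̄))) = x for every precedent (s, X, x) ∈ CB. -/
import Mathlib


variable {α : Type*} [DecidableEq α]

/-- `side Plt Dfd x` is the set of factors favoring outcome `x`
(`true` = plaintiff wins, `false` = defendant wins). -/
def side (Plt Dfd : Finset α) : Bool → Finset α := fun x => if x then Plt else Dfd

/-- A precedent is a triple `(s, X, x)`. A case base is a set of precedents. -/
abbrev CaseBase (α : Type*) := Set (Finset α × Finset α × Bool)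

/-- `prefLt Plt Dfd CB x Y' Y` : reason `Y'` (for `!x`) is less preferred than
reason `Y` (for `x`) according to some precedent in `CB`. -/
def prefLt (Plt Dfd : Finset α) (CB : CaseBase α) (x : Bool) (Y' Y : Finset α) : Prop :=
  ∃ c ∈ CB, c.2.2 = x ∧ Y' ⊆ c.1 ∩ side Plt Dfd (!x) ∧ c.2.1 ⊆ Y

/-- Horty consistency of a case base. -/
def Consistent (Plt Dfd : Finset α) (CB : CaseBase α) : Prop :=
  ¬ ∃ (x : Bool) (Y Y' : Finset α), Y ⊆ side Plt Dfd x ∧ Y' ⊆ side Plt Dfd (!x) ∧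
      prefLt Plt Dfd CB x Y' Y ∧ prefLt Plt Dfd CB (!x) Y Y'

/-- Two-way monotonicity of a classifier. -/
def TwoMon (Plt Dfd : Finset α) (f : Finset α → Option Bool) : Prop :=
  ∀ (x : Bool) (A B A' B' : Finset α), A ⊆ side Plt Dfd x → B ⊆ side Plt Dfd (!x) →
    f (A ∪ B) = some x → A ⊆ A' → A' ⊆ side Plt Dfd x → B' ⊆ B →
    f (A' ∪ B') = some x

/-- Every precedent `(s, X, x)` has `s ⊆ Atm₀` and reason `X ⊆ s ∩ Atm₀ˣ`. -/
def WellFormed (Plt Dfd : Finset α) (CB : CaseBase α) : Prop :=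
  ∀ c ∈ CB, c.1 ⊆ Plt ∪ Dfd ∧ c.2.1 ⊆ c.1 ∩ side Plt Dfd c.2.2

/-- `s` qualifies for outcome `x` via the classifier constructed from `CB`. -/
def Qualifies (Plt Dfd : Finset α) (CB : CaseBase α) (s : Finset α) (x : Bool) : Prop :=
  ∃ c ∈ CB, c.2.2 = x ∧ c.2.1 ⊆ s ∩ side Plt Dfd x ∧
    s ∩ side Plt Dfd (!x) ⊆ c.1 ∩ side Plt Dfd (!x)

/-- `f` realizes case base `CB` (reason-model translation). -/
def Realizes (Plt Dfd : Finset α) (f : Finset α → Option Bool) (CB : CaseBase α) : Prop :=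
  ∀ c ∈ CB, f (c.2.1 ∪ (c.1 ∩ side Plt Dfd (!c.2.2))) = some c.2.2

section Helpers

variable {α : Type*} [DecidableEq α]

lemma side_disj {Plt Dfd : Finset α} (hd : Disjoint Plt Dfd) (x : Bool) :
    Disjoint (side Plt Dfd x) (side Plt Dfd (!x)) := by
  cases x <;> simpa [side] using (by first | exact hd | exact hd.symm : _)

lemma union_inter_side {Plt Dfd : Finset α} (hd : Disjoint Plt Dfd) (x : Bool)
    {A B : Finset α} (hA : A ⊆ side Plt Dfd x) (hB : B ⊆ side Plt Dfd (!x)) :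
    (A ∪ B) ∩ side Plt Dfd x = A := by
  have hBe : B ∩ side Plt Dfd x = ∅ :=
    Finset.disjoint_iff_inter_eq_empty.mp ((side_disj hd x).symm.mono_left hB)
  rw [Finset.union_inter_distrib_right, Finset.inter_eq_left.2 hA, hBe, Finset.union_empty]

lemma union_inter_side' {Plt Dfd : Finset α} (hd : Disjoint Plt Dfd) (x : Bool)
    {A B : Finset α} (hA : A ⊆ side Plt Dfd x) (hB : B ⊆ side Plt Dfd (!x)) :
    (A ∪ B) ∩ side Plt Dfd (!x) = B := by
  rw [Finset.union_comm]
  exact union_inter_side hd (!x) hB (by simpa using hA)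

lemma qual_mono {Plt Dfd : Finset α} (hd : Disjoint Plt Dfd) {CB : CaseBase α}
    {x : Bool} {A B A' B' : Finset α} (hA : A ⊆ side Plt Dfd x)
    (hB : B ⊆ side Plt Dfd (!x)) (h : Qualifies Plt Dfd CB (A ∪ B) x)
    (hAA' : A ⊆ A') (hA' : A' ⊆ side Plt Dfd x) (hB' : B' ⊆ B) :
    Qualifies Plt Dfd CB (A' ∪ B') x := by
  obtain ⟨c, hc, hx, h1, h2⟩ := h
  rw [union_inter_side hd x hA hB] at h1
  rw [union_inter_side' hd x hA hB] at h2
  refine ⟨c, hc, hx, ?_, ?_⟩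
  · rw [union_inter_side hd x hA' (hB'.trans hB)]
    exact h1.trans hAA'
  · rw [union_inter_side' hd x hA' (hB'.trans hB)]
    exact hB'.trans h2

lemma qual_excl {Plt Dfd : Finset α} (hd : Disjoint Plt Dfd) {CB : CaseBase α}
    (hcon : Consistent Plt Dfd CB) {x : Bool} {A B A' B' : Finset α}
    (hA : A ⊆ side Plt Dfd x) (hB : B ⊆ side Plt Dfd (!x))
    (h : Qualifies Plt Dfd CB (A ∪ B) x)
    (hAA' : A ⊆ A') (hA' : A' ⊆ side Plt Dfd x) (hB' : B' ⊆ B) :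
    ¬ Qualifies Plt Dfd CB (A' ∪ B') (!x) := by
  intro hq
  obtain ⟨c, hc, hx, h1, h2⟩ := h
  rw [union_inter_side hd x hA hB] at h1
  rw [union_inter_side' hd x hA hB] at h2
  obtain ⟨c', hc', hx', h1', h2'⟩ := hq
  rw [union_inter_side' hd x hA' (hB'.trans hB)] at h1'
  rw [show (!(!x)) = x from Bool.not_not x,
    union_inter_side hd x hA' (hB'.trans hB)] at h2'
  exact hcon ⟨x, c.2.1, c'.2.1, h1.trans hA, (h1'.trans hB').trans hB,
    ⟨c, hc, hx, ((h1'.trans hB').trans h2), subset_rfl⟩,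
    ⟨c', hc', hx', by
      rw [show (!(!x)) = x from Bool.not_not x]
      exact (h1.trans hAA').trans h2', subset_rfl⟩⟩

end Helpers

lemma qual_iff {Plt Dfd : Finset α} [DecidableEq α] (hd : Disjoint Plt Dfd) {CB : CaseBase α}
    (s : Finset α) (x : Bool) :
    Qualifies Plt Dfd CB s x ↔
      Qualifies Plt Dfd CB ((s ∩ side Plt Dfd x) ∪ (s ∩ side Plt Dfd (!x))) x := by
  unfold Qualifies
  rw [union_inter_side hd x Finset.inter_subset_right Finset.inter_subset_right,
    union_inter_side' hd x Finset.inter_subset_right Finset.inter_subset_right]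

lemma not_both {Plt Dfd : Finset α} [DecidableEq α] (hd : Disjoint Plt Dfd) {CB : CaseBase α}
    (hcon : Consistent Plt Dfd CB) (s : Finset α) (x : Bool)
    (h : Qualifies Plt Dfd CB s x) : ¬ Qualifies Plt Dfd CB s (!x) := by
  intro h'
  rw [qual_iff hd] at h h'
  refine qual_excl hd hcon Finset.inter_subset_right Finset.inter_subset_right h
    subset_rfl Finset.inter_subset_right subset_rfl ?_
  rw [Finset.union_comm]
  rw [show (!(!x)) = x from Bool.not_not x] at h'
  exact h'

theorem stmt5 (Plt Dfd : Finset α) (hd : Disjoint Plt Dfd) (CB : CaseBase α)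
    (hwf : WellFormed Plt Dfd CB) :
    Consistent Plt Dfd CB ↔
      ∃ f : Finset α → Option Bool, TwoMon Plt Dfd f ∧ Realizes Plt Dfd f CB := by
  constructor
  · intro hcon
    classical
    refine ⟨fun s => if Qualifies Plt Dfd CB s true then some true
      else if Qualifies Plt Dfd CB s false then some false else none, ?_, ?_⟩
    · intro x A B A' B' hA hB hf hAA' hA' hB'
      simp only at hf ⊢
      have hq : Qualifies Plt Dfd CB (A ∪ B) x := by
        cases x <;> split_ifs at hf <;> simp_all
      have hq' := qual_mono hd hA hB hq hAA' hA' hB'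
      have hne := qual_excl hd hcon hA hB hq hAA' hA' hB'
      cases x
      · rw [if_neg (by simpa using hne), if_pos hq']
      · rw [if_pos hq']
    · intro c hc
      simp only
      set x := c.2.2 with hx
      have hwfc := (hwf c hc).2
      have hA : c.2.1 ⊆ side Plt Dfd x := (hwfc.trans Finset.inter_subset_right)
      have hB : c.1 ∩ side Plt Dfd (!x) ⊆ side Plt Dfd (!x) := Finset.inter_subset_right
      have hq : Qualifies Plt Dfd CB (c.2.1 ∪ c.1 ∩ side Plt Dfd (!x)) x := by
        refine ⟨c, hc, rfl, ?_, ?_⟩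
        · rw [union_inter_side hd x hA hB]
        · rw [union_inter_side' hd x hA hB]
      have hne := qual_excl hd hcon hA hB hq subset_rfl hA subset_rfl
      cases hxv : x
      · rw [hxv] at hq hne
        rw [if_neg (by simpa using hne), if_pos hq]
      · rw [hxv] at hq hne
        rw [if_pos hq]
  · rintro ⟨f, hmon, hreal⟩ ⟨x, Y, Y', hY, hY', ⟨c, hc, hx, h1, h2⟩, ⟨c', hc', hx', h1', h2'⟩⟩
    have hfc := hreal c hc
    rw [hx] at hfc
    have hAc : c.2.1 ⊆ side Plt Dfd x := by
      have := (hwf c hc).2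
      rw [hx] at this
      exact this.trans Finset.inter_subset_right
    have h3 : f (Y ∪ Y') = some x :=
      hmon x c.2.1 (c.1 ∩ side Plt Dfd (!x)) Y Y' hAc Finset.inter_subset_right hfc h2 hY h1
    have hfc' := hreal c' hc'
    rw [hx'] at hfc'
    have hAc' : c'.2.1 ⊆ side Plt Dfd (!x) := by
      have := (hwf c' hc').2
      rw [hx'] at this
      exact this.trans Finset.inter_subset_right
    have h4 : f (Y' ∪ Y) = some (!x) :=
      hmon (!x) c'.2.1 (c'.1 ∩ side Plt Dfd (!(!x))) Y' Y hAc' Finset.inter_subset_right hfc'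
        h2' hY' h1'
    rw [Finset.union_comm, h3] at h4
    cases x <;> simp_all
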